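/- Let k ≥ 1 and n = 2k + 1. For any three vertices u, v, w of the Cartesian product graph C_n □ C_n, the sum of pairwise distances satisfies d(u,v) + d(v,w) + d(u,w) ≤ 2·diam(C_n □ C_n) + 2 = 4k + 2. -/

import Mathlib

/-!
The distance of `C_n` is the cyclic distance `min (a - b) (b - a)` on `Fin n`, and distances in
`C_n □ C_n` add up over the two coordinates. Three points of a cycle of length `n` cut it into
three arcs of total length `n`, and each pairwise distance is at most the arc avoiding the third
point, so in each coordinate the three pairwise distances sum to at most `n`. Hence the sum in
question is at most `2n = 4k + 2`, while `diam (C_n □ C_n) = 2 · diam C_n = 2k`.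
-/

open SimpleGraph

/-- `c` is a radio labeling of `G`: labels are positive integers and for every two
distinct vertices `u, v` we have `d(u,v) + |c(u) - c(v)| ≥ 1 + diam(G)`. -/
def IsRadioLabeling {V : Type*} (G : SimpleGraph V) (c : V → ℕ) : Prop :=
  (∀ v, 1 ≤ c v) ∧
    ∀ u v : V, u ≠ v → G.diam + 1 ≤ G.dist u v + Nat.dist (c u) (c v)

/-- The span of a labeling: the maximum label used. -/
def labelSpan {V : Type*} [Fintype V] (c : V → ℕ) : ℕ := Finset.univ.sup c

/-- The radio number of `G`: the minimum span over all radio labelings. -/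
noncomputable def radioNumber {V : Type*} [Fintype V] (G : SimpleGraph V) : ℕ :=
  sInf {s | ∃ c : V → ℕ, IsRadioLabeling G c ∧ labelSpan c = s}

namespace Fin

variable {n : ℕ}

def cyclicDist (a b : Fin n) : ℕ := min (a - b).val (b - a).val

lemma cyclicDist_eq_min_natDist (a b : Fin n) :
    cyclicDist a b = min (Nat.dist a b) (n - Nat.dist a b) := by
  rcases lt_trichotomy a b with h | rfl | h
  · rw [cyclicDist, coe_sub_iff_lt.2 h, sub_val_of_le h.le, Nat.dist]
    omega
  · simp [cyclicDist, sub_val_of_le le_rfl]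
  · rw [cyclicDist, coe_sub_iff_lt.2 h, sub_val_of_le h.le, Nat.dist]
    omega

@[simp]
lemma cyclicDist_self (a : Fin n) : cyclicDist a a = 0 := by
  simp [cyclicDist, sub_val_of_le le_rfl]

lemma cyclicDist_triangle (a b c : Fin n) :
    cyclicDist a c ≤ cyclicDist a b + cyclicDist b c := by
  simp only [cyclicDist_eq_min_natDist, Nat.dist]
  omega

lemma two_mul_cyclicDist_le (a b : Fin n) : 2 * cyclicDist a b ≤ n := by
  simp only [cyclicDist_eq_min_natDist, Nat.dist]
  omega

lemma cyclicDist_add_cyclicDist_add_cyclicDist_le (a b c : Fin n) :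
    cyclicDist a b + cyclicDist b c + cyclicDist a c ≤ n := by
  have := a.is_lt
  have := b.is_lt
  have := c.is_lt
  simp only [cyclicDist_eq_min_natDist, Nat.dist]
  omega

end Fin

namespace SimpleGraph

open Fin

section Metric

variable {V : Type*} {G : SimpleGraph V} {d : V → V → ℕ}

lemma Walk.le_length_of_triangle (hself : ∀ x, d x x = 0)
    (htri : ∀ x y z, d x z ≤ d x y + d y z) (hadj : ∀ x y, G.Adj x y → d x y ≤ 1)
    {u v : V} (p : G.Walk u v) : d u v ≤ p.length := by
  induction p with
  | nil => simp [hself]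
  | @cons x y z h p ih =>
    have := hadj x y h
    rw [length_cons]
    exact (htri x y z).trans (by omega)

lemma Reachable.le_dist_of_triangle (hself : ∀ x, d x x = 0)
    (htri : ∀ x y z, d x z ≤ d x y + d y z) (hadj : ∀ x y, G.Adj x y → d x y ≤ 1)
    {u v : V} (h : G.Reachable u v) : d u v ≤ G.dist u v := by
  obtain ⟨p, hp⟩ := h.exists_walk_length_eq_dist
  exact hp ▸ p.le_length_of_triangle hself htri hadj

end Metric

section BoxProd

variable {α β : Type*} {G : SimpleGraph α} {H : SimpleGraph β}

lemma dist_boxProd {x y : α × β} (hG : G.Reachable x.1 y.1) (hH : H.Reachable x.2 y.2) :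
    (G □ H).dist x y = G.dist x.1 y.1 + H.dist x.2 y.2 := by
  rw [dist, edist_boxProd, ENat.toNat_add (edist_ne_top_iff_reachable.2 hG)
    (edist_ne_top_iff_reachable.2 hH), dist, dist]

lemma ediam_boxProd [Nonempty α] [Nonempty β] : (G □ H).ediam = G.ediam + H.ediam := by
  refine le_antisymm (ediam_le_of_edist_le fun x y ↦ ?_) ?_
  · rw [edist_boxProd]
    exact add_le_add edist_le_ediam edist_le_ediam
  · rw [ediam_def, ediam_def]
    refine ENat.iSup_add_iSup_le fun p q ↦ ?_
    rw [← edist_boxProd (x := (p.1, q.1)) (y := (p.2, q.2))]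
    exact edist_le_ediam

lemma diam_boxProd [Nonempty α] [Nonempty β] (hG : G.ediam ≠ ⊤) (hH : H.ediam ≠ ⊤) :
    (G □ H).diam = G.diam + H.diam := by
  rw [diam, ediam_boxProd, ENat.toNat_add hG hH, diam, diam]

end BoxProd

section CycleGraph

variable {n : ℕ}

lemma cyclicDist_le_one_of_adj {a b : Fin n} (h : (cycleGraph n).Adj a b) :
    cyclicDist a b ≤ 1 := by
  rcases cycleGraph_adj'.1 h with h | h
  · exact (min_le_left _ _).trans h.le
  · exact (min_le_right _ _).trans h.le

open Fin.NatCast in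
lemma cycleGraph_dist_add_natCast_le (a : Fin (n + 2)) (m : ℕ) :
    (cycleGraph (n + 2)).dist a (a + m) ≤ m := by
  induction m with
  | zero => simp
  | succ m ih =>
    have hadj : (cycleGraph (n + 2)).Adj (a + m) (a + (m + 1 : ℕ)) :=
      cycleGraph_adj.2 (Or.inr (by push_cast; abel))
    calc (cycleGraph (n + 2)).dist a (a + (m + 1 : ℕ))
        ≤ (cycleGraph (n + 2)).dist a (a + m) +
            (cycleGraph (n + 2)).dist (a + m) (a + (m + 1 : ℕ)) :=
          (cycleGraph_preconnected _ _).dist_triangle_left _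
      _ ≤ m + 1 := by rw [dist_eq_one_iff_adj.2 hadj]; omega

lemma cycleGraph_dist_le_val_sub (a b : Fin n) : (cycleGraph n).dist a b ≤ (b - a).val := by
  match n, a, b with
  | 1, a, b => simp [Subsingleton.elim a b]
  | n + 2, a, b =>
    simpa using cycleGraph_dist_add_natCast_le a (b - a).val

lemma cycleGraph_dist (a b : Fin n) : (cycleGraph n).dist a b = cyclicDist a b := by
  refine le_antisymm (le_min ?_ (cycleGraph_dist_le_val_sub a b)) ?_
  · rw [dist_comm]
    exact cycleGraph_dist_le_val_sub b a
  · exact (cycleGraph_preconnected a b).le_dist_of_triangle cyclicDist_self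
      cyclicDist_triangle fun _ _ ↦ cyclicDist_le_one_of_adj

lemma cycleGraph_ediam_ne_top : (cycleGraph (n + 1)).ediam ≠ ⊤ :=
  connected_iff_ediam_ne_top.1 cycleGraph_connected

lemma cycleGraph_diam_two_mul_add_one (k : ℕ) : (cycleGraph (2 * k + 1)).diam = k := by
  refine le_antisymm ?_ ?_
  · obtain ⟨u, v, huv⟩ := (cycleGraph (2 * k + 1)).exists_dist_eq_diam
    have := two_mul_cyclicDist_le u v
    rw [← huv, cycleGraph_dist]
    omega
  · have h := dist_le_diam cycleGraph_ediam_ne_top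
      (u := (0 : Fin (2 * k + 1))) (v := ⟨k, by omega⟩)
    rwa [cycleGraph_dist, cyclicDist_eq_min_natDist, Fin.val_zero, Fin.val_mk, Nat.dist_zero_left,
      min_eq_left (by omega)] at h

end CycleGraph

end SimpleGraph

theorem sum_dist_le_two_diam_add_two_odd_general (n k : ℕ) (hn : n = 2 * k + 1)
    (u v w : Fin n × Fin n) :
    (cycleGraph n □ cycleGraph n).dist u v + (cycleGraph n □ cycleGraph n).dist v w +
        (cycleGraph n □ cycleGraph n).dist u w ≤ 2 * (cycleGraph n □ cycleGraph n).diam + 2 ∧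
      2 * (cycleGraph n □ cycleGraph n).diam + 2 = 4 * k + 2 := by
  subst hn
  have hdiam : (cycleGraph (2 * k + 1) □ cycleGraph (2 * k + 1)).diam = 2 * k := by
    rw [diam_boxProd cycleGraph_ediam_ne_top cycleGraph_ediam_ne_top,
      cycleGraph_diam_two_mul_add_one]
    ring
  have hfst := Fin.cyclicDist_add_cyclicDist_add_cyclicDist_le u.1 v.1 w.1
  have hsnd := Fin.cyclicDist_add_cyclicDist_add_cyclicDist_le u.2 v.2 w.2
  simp only [dist_boxProd (cycleGraph_preconnected _ _) (cycleGraph_preconnected _ _),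
    cycleGraph_dist, hdiam]
  omega

/-- for `n = 2k + 1`, `k ≥ 1`, any three vertices of `C_n □ C_n` have pairwise
distance sum at most `2 · diam(C_n □ C_n) + 2 = 4k + 2`. -/
theorem sum_dist_le_two_diam_add_two_odd (n k : ℕ) (hk : 1 ≤ k) (hn : n = 2 * k + 1)
    (u v w : Fin n × Fin n) :
    (cycleGraph n □ cycleGraph n).dist u v + (cycleGraph n □ cycleGraph n).dist v w +
        (cycleGraph n □ cycleGraph n).dist u w ≤ 2 * (cycleGraph n □ cycleGraph n).diam + 2 ∧
      2 * (cycleGraph n □ cycleGraph n).diam + 2 = 4 * k + 2 :=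
  sum_dist_le_two_diam_add_two_odd_general n k hn u v w
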